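/- Let |φ⟩ be a state of a finite register V of qubits, u ∈ V, λ a two-element subset of {X,Y,Z} with complementary Pauli P, and C a multi-qubit Pauli operator not acting on u. If for all angles α, ⟨+^λ_α|_u |φ⟩ ≃ C ⟨−^λ_α|_u |φ⟩ (equality up to global phase) and |⟨+^λ_α|_u|φ⟩| = 1/√2, then |φ⟩ ≃ (C ⊗ P_u) |φ⟩. -/

import Mathlib

/-- The Pauli matrices, indexed by `Fin 3`: `0 ↦ X`, `1 ↦ Y`, `2 ↦ Z`. -/
noncomputable def pauliMat : Fin 3 → Matrix (Fin 2) (Fin 2) ℂ :=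
  ![!![0, 1; 1, 0], !![0, -Complex.I; Complex.I, 0], !![1, 0; 0, -1]]

/-- `|+^P_0⟩`, the `+1` eigenvector of the Pauli `P`. -/
noncomputable def plusVec : Fin 3 → Fin 2 → ℂ :=
  ![![(Real.sqrt 2 : ℂ)⁻¹, (Real.sqrt 2 : ℂ)⁻¹],
    ![(Real.sqrt 2 : ℂ)⁻¹, Complex.I * (Real.sqrt 2 : ℂ)⁻¹],
    ![1, 0]]

/-- `|−^P_0⟩`, the `−1` eigenvector of the Pauli `P`. -/
noncomputable def minusVec : Fin 3 → Fin 2 → ℂ :=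
  ![![(Real.sqrt 2 : ℂ)⁻¹, -(Real.sqrt 2 : ℂ)⁻¹],
    ![(Real.sqrt 2 : ℂ)⁻¹, -(Complex.I * (Real.sqrt 2 : ℂ)⁻¹)],
    ![0, 1]]

/-- `|+^λ_α⟩ = (|+^P_0⟩ + e^{iα} |−^P_0⟩)/√2`, where `P` is the Pauli complementary to the
plane `λ` (the plane `λ` consists of the two Paulis distinct from `P`). -/
noncomputable def planePlus (P : Fin 3) (α : ℝ) : Fin 2 → ℂ :=
  (Real.sqrt 2 : ℂ)⁻¹ • (plusVec P + Complex.exp (α * Complex.I) • minusVec P)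

/-- `|−^λ_α⟩ = (|+^P_0⟩ − e^{iα} |−^P_0⟩)/√2`. -/
noncomputable def planeMinus (P : Fin 3) (α : ℝ) : Fin 2 → ℂ :=
  (Real.sqrt 2 : ℂ)⁻¹ • (plusVec P - Complex.exp (α * Complex.I) • minusVec P)
/-- Squared norm of a state given by its amplitude function. -/
noncomputable def norm2 {ι : Type*} [Fintype ι] (ψ : ι → ℂ) : ℝ := ∑ s, ‖ψ s‖ ^ 2

/-- Partial inner product `⟨χ|_u |φ⟩`: contracting qubit `u` of `φ` with the bra of `χ`,
yielding a state of the register `V ∖ {u}`. -/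
noncomputable def partialInner {V : Type*} [Fintype V] [DecidableEq V] (u : V)
    (χ : Fin 2 → ℂ) (φ : (V → Fin 2) → ℂ) : ({v : V // v ≠ u} → Fin 2) → ℂ :=
  fun t => ∑ b : Fin 2, (starRingEnd ℂ) (χ b) *
    φ (fun v => if h : v = u then b else t ⟨v, h⟩)

/-- `χ_u ⊗ ψ`: the state with qubit `u` in the single-qubit state `χ` and the rest of the
register in the state `ψ`. -/
def tensorAt {V : Type*} [DecidableEq V] (u : V) (χ : Fin 2 → ℂ)
    (ψ : ({v : V // v ≠ u} → Fin 2) → ℂ) : (V → Fin 2) → ℂ :=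
  fun s => χ (s u) * ψ (fun v => s v.1)
/-- Pauli `X` applied on every qubit of `A`. -/
def Xop {V : Type*} [DecidableEq V] (A : Finset V) (ψ : (V → Fin 2) → ℂ) : (V → Fin 2) → ℂ :=
  fun s => ψ fun v => if v ∈ A then s v + 1 else s v

/-- Pauli `Z` applied on every qubit of `B`. -/
def Zop {V : Type*} [DecidableEq V] (B : Finset V) (ψ : (V → Fin 2) → ℂ) : (V → Fin 2) → ℂ :=
  fun s => (-1 : ℂ) ^ (B.filter fun v => s v = 1).card * ψ s

/-- The single-qubit Pauli `P` applied on qubit `u`. -/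
noncomputable def pauliAt {V : Type*} [DecidableEq V] (u : V) (P : Fin 3)
    (φ : (V → Fin 2) → ℂ) : (V → Fin 2) → ℂ :=
  fun s => ∑ b : Fin 2, pauliMat P (s u) b * φ (Function.update s u b)

/-!
Write `f = ⟨+^P|_u φ⟩` and `g = ⟨−^P|_u φ⟩`, so that `φ = |+^P⟩ f + |−^P⟩ g` and
`P_u φ = |+^P⟩ f − |−^P⟩ g`, and let `U` be the restriction of `C` to `V ∖ {u}`. With
`w = e^{-iα}` the hypotheses say `U (f − w g) ≃ f + w g` and `‖f + w g‖² = 1` for every unit `w`.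
By polarization the second condition makes `f` and `g` orthogonal, hence independent unless one
vanishes. The cases `w = ±1` show that `U` maps `f ± g` to multiples of `f ∓ g`, and `w = i`
forces the two multiples to agree, so `U f = d f` and `U g = −d g`; thus `C P_u φ = d φ`.
-/

section Register

open Finset

variable {V : Type*} [DecidableEq V]

def flipAt (A : Finset V) (s : V → Fin 2) : V → Fin 2 :=
  fun v => if v ∈ A then s v + 1 else s v

def insertAt (u : V) (b : Fin 2) (t : {v : V // v ≠ u} → Fin 2) : V → Fin 2 :=
  fun v => if h : v = u then b else t ⟨v, h⟩

lemma restrict_insertAt (u : V) (b : Fin 2) (t : {v : V // v ≠ u} → Fin 2) :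
    Subtype.restrict (· ≠ u) (insertAt u b t) = t := by
  funext v; simp [insertAt, v.2]

lemma insertAt_restrict (u : V) (s : V → Fin 2) :
    insertAt u (s u) (Subtype.restrict (· ≠ u) s) = s := by
  funext v; by_cases h : v = u <;> simp [insertAt, h]

lemma flipAt_insertAt {A : Finset V} {u : V} (hA : u ∉ A) (b : Fin 2)
    (t : {v : V // v ≠ u} → Fin 2) :
    flipAt A (insertAt u b t) = insertAt u b (flipAt (A.subtype (· ≠ u)) t) := by
  funext v
  by_cases h : v = u
  · subst h; simp [flipAt, insertAt, hA]
  · simp [flipAt, insertAt, h]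

lemma restrict_flipAt (A : Finset V) (u : V) (s : V → Fin 2) :
    Subtype.restrict (· ≠ u) (flipAt A s)
      = flipAt (A.subtype (· ≠ u)) (Subtype.restrict (· ≠ u) s) := by
  funext v; simp [flipAt]

lemma flipAt_apply_of_notMem {A : Finset V} {u : V} (hA : u ∉ A) (s : V → Fin 2) :
    flipAt A s u = s u := by
  simp [flipAt, hA]

lemma card_filter_subtype_of_notMem {B : Finset V} {u : V} (hB : u ∉ B) (s : V → Fin 2) :
    #((B.subtype (· ≠ u)).filter fun v => Subtype.restrict (· ≠ u) s v = 1)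
      = #(B.filter (s · = 1)) := by
  have hfilter : (B.subtype (· ≠ u)).filter (fun v => Subtype.restrict (· ≠ u) s v = 1)
      = (B.filter (s · = 1)).subtype (· ≠ u) := by ext v; simp
  rw [hfilter, card_subtype, filter_true_of_mem]
  rintro v hv rfl
  exact hB (mem_filter.1 hv).1

lemma partialInner_apply [Fintype V] (u : V) (χ : Fin 2 → ℂ) (φ : (V → Fin 2) → ℂ)
    (t : {v : V // v ≠ u} → Fin 2) :
    partialInner u χ φ t = ∑ b, starRingEnd ℂ (χ b) * φ (insertAt u b t) := rfl

lemma tensorAt_apply (u : V) (χ : Fin 2 → ℂ) (ψ : ({v : V // v ≠ u} → Fin 2) → ℂ)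
    (s : V → Fin 2) :
    tensorAt u χ ψ s = χ (s u) * ψ (Subtype.restrict (· ≠ u) s) := rfl

def pauliXZ (A B : Finset V) : ((V → Fin 2) → ℂ) →ₗ[ℂ] (V → Fin 2) → ℂ where
  toFun ψ := Xop A (Zop B ψ)
  map_add' ψ χ := by funext s; simp only [Xop, Zop, Pi.add_apply]; ring
  map_smul' c ψ := by
    funext s; simp only [Xop, Zop, Pi.smul_apply, smul_eq_mul, RingHom.id_apply]; ring

lemma Xop_Zop_eq_pauliXZ (A B : Finset V) (ψ : (V → Fin 2) → ℂ) :
    Xop A (Zop B ψ) = pauliXZ A B ψ := rfl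

lemma pauliXZ_apply (A B : Finset V) (ψ : (V → Fin 2) → ℂ) (s : V → Fin 2) :
    pauliXZ A B ψ s = (-1) ^ #(B.filter (flipAt A s · = 1)) * ψ (flipAt A s) := rfl

variable {A B : Finset V} {u : V}

lemma partialInner_pauliXZ [Fintype V] (hA : u ∉ A) (hB : u ∉ B) (χ : Fin 2 → ℂ)
    (φ : (V → Fin 2) → ℂ) :
    partialInner u χ (pauliXZ A B φ)
      = pauliXZ (A.subtype (· ≠ u)) (B.subtype (· ≠ u)) (partialInner u χ φ) := by
  funext t
  simp only [partialInner_apply, pauliXZ_apply, mul_sum, flipAt_insertAt hA,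
    ← card_filter_subtype_of_notMem hB, restrict_insertAt]
  exact sum_congr rfl fun _ _ => mul_left_comm _ _ _

lemma pauliXZ_tensorAt (hA : u ∉ A) (hB : u ∉ B) (χ : Fin 2 → ℂ)
    (ψ : ({v : V // v ≠ u} → Fin 2) → ℂ) :
    pauliXZ A B (tensorAt u χ ψ)
      = tensorAt u χ (pauliXZ (A.subtype (· ≠ u)) (B.subtype (· ≠ u)) ψ) := by
  funext s
  simp only [tensorAt_apply, pauliXZ_apply, flipAt_apply_of_notMem hA,
    ← card_filter_subtype_of_notMem hB, restrict_flipAt]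
  ring

end Register

section Qubit

open Matrix

lemma inv_sqrt_two_sq : (Real.sqrt 2 : ℂ)⁻¹ ^ 2 = 2⁻¹ := by
  rw [sq, ← mul_inv, ← Complex.ofReal_mul, Real.mul_self_sqrt zero_le_two]; norm_num

lemma norm_inv_sqrt_two_sq : ‖(Real.sqrt 2 : ℂ)⁻¹‖ ^ 2 = 1 / 2 := by
  rw [← norm_pow, inv_sqrt_two_sq]; norm_num

lemma plusVec_minusVec_completeness (P : Fin 3) (a b : Fin 2) :
    plusVec P a * starRingEnd ℂ (plusVec P b) + minusVec P a * starRingEnd ℂ (minusVec P b)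
      = if a = b then 1 else 0 := by
  have h := inv_sqrt_two_sq
  fin_cases P <;> fin_cases a <;> fin_cases b <;>
    simp [plusVec, minusVec, Complex.conj_ofReal] <;> ring_nf <;> simp [h, Complex.I_sq]

lemma pauliMat_mulVec_plusVec (P : Fin 3) : pauliMat P *ᵥ plusVec P = plusVec P := by
  ext a
  fin_cases P <;> fin_cases a <;>
    simp [pauliMat, plusVec, mulVec, dotProduct, Fin.sum_univ_two, ← mul_assoc]

lemma pauliMat_mulVec_minusVec (P : Fin 3) : pauliMat P *ᵥ minusVec P = -minusVec P := by
  ext a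
  fin_cases P <;> fin_cases a <;>
    simp [pauliMat, minusVec, mulVec, dotProduct, Fin.sum_univ_two, ← mul_assoc]

end Qubit

section Decomposition

open Matrix

variable {V : Type*} [DecidableEq V] (u : V)

lemma tensorAt_smul_right (χ : Fin 2 → ℂ) (c : ℂ)
    (ψ : ({v : V // v ≠ u} → Fin 2) → ℂ) :
    tensorAt u χ (c • ψ) = c • tensorAt u χ ψ := by
  funext s; simp only [tensorAt, Pi.smul_apply, smul_eq_mul]; ring

lemma tensorAt_neg_left (χ : Fin 2 → ℂ) (ψ : ({v : V // v ≠ u} → Fin 2) → ℂ) :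
    tensorAt u (-χ) ψ = -tensorAt u χ ψ := by
  funext s; simp [tensorAt]

lemma pauliAt_add (P : Fin 3) (φ₁ φ₂ : (V → Fin 2) → ℂ) :
    pauliAt u P (φ₁ + φ₂) = pauliAt u P φ₁ + pauliAt u P φ₂ := by
  funext s; simp only [pauliAt, Pi.add_apply, mul_add, Finset.sum_add_distrib]

lemma pauliAt_tensorAt (P : Fin 3) (χ : Fin 2 → ℂ)
    (ψ : ({v : V // v ≠ u} → Fin 2) → ℂ) :
    pauliAt u P (tensorAt u χ ψ) = tensorAt u (pauliMat P *ᵥ χ) ψ := by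
  funext s
  have hres (b : Fin 2) : Subtype.restrict (· ≠ u) (Function.update s u b)
      = Subtype.restrict (· ≠ u) s := by
    funext v; exact Function.update_of_ne v.2 b s
  simp only [pauliAt, tensorAt_apply, Function.update_self, hres, mulVec, dotProduct,
    Finset.sum_mul, mul_assoc]

variable [Fintype V]

lemma partialInner_add_left (χ₁ χ₂ : Fin 2 → ℂ) (φ : (V → Fin 2) → ℂ) :
    partialInner u (χ₁ + χ₂) φ = partialInner u χ₁ φ + partialInner u χ₂ φ := by
  funext t
  simp only [partialInner, Pi.add_apply, map_add, add_mul, Finset.sum_add_distrib]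

lemma partialInner_sub_left (χ₁ χ₂ : Fin 2 → ℂ) (φ : (V → Fin 2) → ℂ) :
    partialInner u (χ₁ - χ₂) φ = partialInner u χ₁ φ - partialInner u χ₂ φ := by
  funext t
  simp only [partialInner, Pi.sub_apply, map_sub, sub_mul, Finset.sum_sub_distrib]

lemma partialInner_smul_left (c : ℂ) (χ : Fin 2 → ℂ) (φ : (V → Fin 2) → ℂ) :
    partialInner u (c • χ) φ = star c • partialInner u χ φ := by
  funext t
  simp only [partialInner, Pi.smul_apply, smul_eq_mul, map_mul, Finset.mul_sum, mul_assoc]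
  rfl

lemma eq_tensorAt_add_tensorAt (P : Fin 3) (φ : (V → Fin 2) → ℂ) :
    φ = tensorAt u (plusVec P) (partialInner u (plusVec P) φ)
      + tensorAt u (minusVec P) (partialInner u (minusVec P) φ) := by
  funext s
  simp only [Pi.add_apply, tensorAt_apply, partialInner_apply, Finset.mul_sum, ← mul_assoc,
    ← Finset.sum_add_distrib, ← add_mul]
  simp only [plusVec_minusVec_completeness, ite_mul, one_mul, zero_mul,
    Finset.sum_ite_eq, Finset.mem_univ, if_true, insertAt_restrict]

end Decomposition

section Plane

variable {V : Type*} [Fintype V] [DecidableEq V] (u : V) (P : Fin 3) (α : ℝ)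
  (φ : (V → Fin 2) → ℂ)

lemma partialInner_planePlus :
    partialInner u (planePlus P α) φ = (Real.sqrt 2 : ℂ)⁻¹ • (partialInner u (plusVec P) φ
      + starRingEnd ℂ (Complex.exp (α * Complex.I)) • partialInner u (minusVec P) φ) := by
  simp only [planePlus, partialInner_smul_left, partialInner_add_left, Complex.star_def,
    map_inv₀, Complex.conj_ofReal]

lemma partialInner_planeMinus :
    partialInner u (planeMinus P α) φ = (Real.sqrt 2 : ℂ)⁻¹ • (partialInner u (plusVec P) φ
      - starRingEnd ℂ (Complex.exp (α * Complex.I)) • partialInner u (minusVec P) φ) := by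
  simp only [planeMinus, partialInner_smul_left, partialInner_sub_left, Complex.star_def,
    map_inv₀, Complex.conj_ofReal]

end Plane

lemma Complex.exists_conj_exp_mul_I_eq {w : ℂ} (hw : ‖w‖ = 1) :
    ∃ α : ℝ, starRingEnd ℂ (Complex.exp (α * Complex.I)) = w := by
  refine ⟨-Complex.arg w, ?_⟩
  rw [← Complex.exp_conj, map_mul, Complex.conj_ofReal, Complex.conj_I, Complex.ofReal_neg,
    neg_mul_neg]
  simpa [hw] using Complex.norm_mul_exp_arg_mul_I w

section Orthogonality

open scoped InnerProductSpace

lemma inner_eq_zero_of_norm_add_smul_sq_eq {E : Type*} [NormedAddCommGroup E]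
    [InnerProductSpace ℂ E] {x y : E} {r : ℝ} (h : ∀ w : ℂ, ‖w‖ = 1 → ‖x + w • y‖ ^ 2 = r) :
    ⟪x, y⟫_ℂ = 0 := by
  have h₁ := h 1 (by simp)
  have h₂ := h (-1) (by simp)
  have h₃ := h Complex.I (by simp)
  have h₄ := h (-Complex.I) (by simp)
  rw [neg_smul, ← sub_eq_add_neg] at h₂ h₄
  rw [one_smul] at h₁ h₂
  rw [inner_eq_sum_norm_sq_div_four]
  simp only [RCLike.I_to_complex, ← RCLike.ofReal_pow, h₁, h₂, h₃, h₄]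
  ring

variable {ι : Type*} [Fintype ι]

lemma norm2_smul (c : ℂ) (ψ : ι → ℂ) : norm2 (c • ψ) = ‖c‖ ^ 2 * norm2 ψ := by
  simp [norm2, mul_pow, Finset.mul_sum]

lemma norm2_eq_norm_toLp_sq (ψ : ι → ℂ) : norm2 ψ = ‖WithLp.toLp 2 ψ‖ ^ 2 := by
  rw [EuclideanSpace.norm_sq_eq]; rfl

lemma eq_zero_or_eq_zero_or_linearIndependent_of_norm2_add_smul_eq {f g : ι → ℂ} {r : ℝ}
    (h : ∀ w : ℂ, ‖w‖ = 1 → norm2 (f + w • g) = r) :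
    f = 0 ∨ g = 0 ∨ LinearIndependent ℂ ![f, g] := by
  by_cases hf : f = 0
  · exact Or.inl hf
  by_cases hg : g = 0
  · exact Or.inr (Or.inl hg)
  refine Or.inr (Or.inr ?_)
  let e := (WithLp.linearEquiv 2 ℂ (ι → ℂ)).symm
  have horth : ⟪e f, e g⟫_ℂ = 0 :=
    inner_eq_zero_of_norm_add_smul_sq_eq (r := r) fun w hw => by
      rw [← map_smul, ← map_add, ← h w hw, norm2_eq_norm_toLp_sq]; rfl
  have hli : LinearIndependent ℂ ![e f, e g] := by
    refine linearIndependent_of_ne_zero_of_inner_eq_zero ?_ ?_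
    · intro i; fin_cases i <;> simpa
    · intro i j hij
      fin_cases i <;> fin_cases j <;> simp_all [inner_eq_zero_symm]
  rw [LinearIndependent.pair_iff] at hli ⊢
  intro s t hst
  exact hli s t (by rw [← map_smul, ← map_smul, ← map_add, hst, map_zero])

end Orthogonality

section Eigen

open Complex

variable {M : Type*} [AddCommGroup M] [Module ℂ M]

lemma apply_eq_smul_of_apply_sub_smul_eq (U : M →ₗ[ℂ] M) {f g : M}
    (hfg : LinearIndependent ℂ ![f, g]) {d₁ d₂ d₃ : ℂ}
    (h₁ : U (f - g) = d₁ • (f + g)) (h₂ : U (f + g) = d₂ • (f - g))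
    (h₃ : U (f - I • g) = d₃ • (f + I • g)) : U f = d₁ • f := by
  have hsplit : f - I • g = ((1 - I) / 2) • (f + g) + ((1 + I) / 2) • (f - g) := by module
  rw [hsplit, map_add, map_smul, map_smul, h₁, h₂] at h₃
  have hdep : ((1 + I) / 2 * d₁ + (1 - I) / 2 * d₂ - d₃) • f
      + ((1 + I) / 2 * d₁ - (1 - I) / 2 * d₂ - I * d₃) • g = 0 := by
    linear_combination (norm := module) h₃
  obtain ⟨hs, ht⟩ := LinearIndependent.pair_iff.1 hfg _ _ hdep
  have hd : d₂ = d₁ := by linear_combination I * hs - ht + (d₂ - d₁) / 2 * I_sq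
  have hf : f = (1 / 2 : ℂ) • (f + g) + (1 / 2 : ℂ) • (f - g) := by module
  rw [hf, map_add, map_smul, map_smul, h₁, h₂, hd]
  module

lemma exists_apply_eq_smul_and_apply_eq_neg_smul (U : M →ₗ[ℂ] M) {f g : M}
    (hfg : f = 0 ∨ g = 0 ∨ LinearIndependent ℂ ![f, g])
    (h : ∀ w : ℂ, ‖w‖ = 1 → ∃ d : ℂ, ‖d‖ = 1 ∧ U (f - w • g) = d • (f + w • g)) :
    ∃ d : ℂ, ‖d‖ = 1 ∧ U f = d • f ∧ U g = -d • g := by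
  obtain ⟨d₁, hd₁, h₁⟩ := h 1 (by simp)
  rw [one_smul] at h₁
  have hf : U f = d₁ • f := by
    rcases hfg with rfl | rfl | hli
    · simp
    · simpa using h₁
    · obtain ⟨d₂, -, h₂⟩ := h (-1) (by simp)
      obtain ⟨d₃, -, h₃⟩ := h I (by simp)
      rw [neg_smul, one_smul, sub_neg_eq_add, ← sub_eq_add_neg] at h₂
      exact apply_eq_smul_of_apply_sub_smul_eq U hli h₁ h₂ h₃
  refine ⟨d₁, hd₁, hf, ?_⟩
  rw [map_sub, hf] at h₁
  linear_combination (norm := module) -h₁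

end Eigen

lemma pauliXZ_pauliAt_eq_smul {V : Type*} [Fintype V] [DecidableEq V] {u : V} {A B : Finset V}
    (hA : u ∉ A) (hB : u ∉ B) (P : Fin 3) (φ : (V → Fin 2) → ℂ) {d : ℂ}
    (hplus : pauliXZ (A.subtype (· ≠ u)) (B.subtype (· ≠ u)) (partialInner u (plusVec P) φ)
      = d • partialInner u (plusVec P) φ)
    (hminus : pauliXZ (A.subtype (· ≠ u)) (B.subtype (· ≠ u)) (partialInner u (minusVec P) φ)
      = -d • partialInner u (minusVec P) φ) :
    pauliXZ A B (pauliAt u P φ) = d • φ := by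
  conv_lhs => rw [eq_tensorAt_add_tensorAt u P φ]
  rw [pauliAt_add, pauliAt_tensorAt, pauliAt_tensorAt, pauliMat_mulVec_plusVec,
    pauliMat_mulVec_minusVec, tensorAt_neg_left, map_add, map_neg, pauliXZ_tensorAt hA hB,
    pauliXZ_tensorAt hA hB, hplus, hminus, tensorAt_smul_right, tensorAt_smul_right, neg_smul,
    neg_neg, ← smul_add, ← eq_tensorAt_add_tensorAt]

theorem stmt7_general {V : Type*} [Fintype V] [DecidableEq V] (u : V) (P : Fin 3)
    (A B : Finset V) (hA : u ∉ A) (hB : u ∉ B)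
    (φ : (V → Fin 2) → ℂ)
    (hsim : ∀ α : ℝ, ∃ c : ℂ, ‖c‖ = 1 ∧
      partialInner u (planePlus P α) φ
        = c • partialInner u (planeMinus P α) (Xop A (Zop B φ)))
    (hhalf : ∀ α : ℝ, norm2 (partialInner u (planePlus P α) φ) = 1 / 2) :
    ∃ c : ℂ, ‖c‖ = 1 ∧ φ = c • Xop A (Zop B (pauliAt u P φ)) := by
  set f := partialInner u (plusVec P) φ
  set g := partialInner u (minusVec P) φ
  set U := pauliXZ (A.subtype (· ≠ u)) (B.subtype (· ≠ u))
  have hnorm (w : ℂ) (hw : ‖w‖ = 1) : norm2 (f + w • g) = 1 := by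
    obtain ⟨α, rfl⟩ := Complex.exists_conj_exp_mul_I_eq hw
    have h := hhalf α
    rw [partialInner_planePlus, norm2_smul, norm_inv_sqrt_two_sq] at h
    linarith
  have hU (w : ℂ) (hw : ‖w‖ = 1) : ∃ d : ℂ, ‖d‖ = 1 ∧ U (f - w • g) = d • (f + w • g) := by
    obtain ⟨α, rfl⟩ := Complex.exists_conj_exp_mul_I_eq hw
    obtain ⟨c, hc, h⟩ := hsim α
    rw [partialInner_planePlus, Xop_Zop_eq_pauliXZ, partialInner_pauliXZ hA hB,
      partialInner_planeMinus, map_smul, smul_comm c] at h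
    refine ⟨c⁻¹, by rw [norm_inv, hc, inv_one], ?_⟩
    rw [smul_right_injective _ (by simp) h, inv_smul_smul₀ (norm_ne_zero_iff.1 (by simp [hc]))]
  obtain ⟨d, hd, hUf, hUg⟩ := exists_apply_eq_smul_and_apply_eq_neg_smul U
    (eq_zero_or_eq_zero_or_linearIndependent_of_norm2_add_smul_eq hnorm) hU
  refine ⟨d⁻¹, by rw [norm_inv, hd, inv_one], ?_⟩
  rw [Xop_Zop_eq_pauliXZ, pauliXZ_pauliAt_eq_smul hA hB P φ hUf hUg,
    inv_smul_smul₀ (norm_ne_zero_iff.1 (by simp [hd]))]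

/-- If for all angles `α`, `⟨+^λ_α|_u |φ⟩ ≃ C ⟨−^λ_α|_u |φ⟩` for a multi-qubit Pauli
`C = X_A Z_B` not acting on `u`, with all outcome probabilities `1/2`, then
`|φ⟩ ≃ (C ⊗ P_u) |φ⟩`, where `P` is the Pauli complementary to the plane `λ`. -/
theorem stmt7 {V : Type*} [Fintype V] [DecidableEq V] (u : V) (P : Fin 3)
    (A B : Finset V) (hA : u ∉ A) (hB : u ∉ B)
    (φ : (V → Fin 2) → ℂ) (hφ : norm2 φ = 1)
    (hsim : ∀ α : ℝ, ∃ c : ℂ, ‖c‖ = 1 ∧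
      partialInner u (planePlus P α) φ
        = c • partialInner u (planeMinus P α) (Xop A (Zop B φ)))
    (hhalf : ∀ α : ℝ, norm2 (partialInner u (planePlus P α) φ) = 1 / 2) :
    ∃ c : ℂ, ‖c‖ = 1 ∧ φ = c • Xop A (Zop B (pauliAt u P φ)) :=
  stmt7_general u P A B hA hB φ hsim hhalf
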